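/- arXiv:2401.11701 — 8 statements merged into one kernel-verified Lean document; each statement's English description precedes it below -/
import Mathlib

section
/- If S is an integrable real random variable with a strictly positive Lebesgue density on the set where its CDF lies in (0,1), then the Expected Shortfall at level α ∈ (0,1), defined as ES_α(S) = (1/(1-α)) ∫_α^1 VaR_β(S) dβ, equals the conditional expectation E[S | S ≥ VaR_α(S)]. -/
/-!
Let `μ` be the law of `S` and `q β = VaR_β(S)` its lower quantile function. For `β ∈ (0,1)` one has
`q β ≤ x ↔ β ≤ F x`, so `q` pushes Lebesgue measure on `(0,1)` forward to `μ`. When `F` is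
continuous, `F (q β) = β`, hence `q α ≤ q β ↔ α ≤ β`: the pushforward of Lebesgue measure on
`[α,1)` is `μ` restricted to `[q α, ∞)`. Integrating `x` against both gives
`∫_α^1 q = E[S; S ≥ q α]`, and comparing total masses gives `P(S ≥ q α) = 1 - α`.
-/

open MeasureTheory ProbabilityTheory Set

variable {Ω : Type*} [MeasureSpace Ω]

/-- Value-at-Risk at level `α`. -/
noncomputable def VaR (α : ℝ) (S : Ω → ℝ) : ℝ :=
  sInf {x : ℝ | α ≤ (ℙ {ω | S ω ≤ x}).toReal}

namespace ProbabilityTheory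

/-- The lower quantile function of `μ`; junk (an `sInf` of `ℝ` or of `∅`) outside `(0, 1)`. -/
noncomputable def quantile (μ : Measure ℝ) (β : ℝ) : ℝ :=
  sInf {x | β ≤ cdf μ x}

variable {μ : Measure ℝ} {α β : ℝ}

lemma bddBelow_setOf_le_cdf (hβ : 0 < β) : BddBelow {x | β ≤ cdf μ x} := by
  obtain ⟨a, ha⟩ := ((tendsto_cdf_atBot μ).eventually_lt_const hβ).exists
  exact ⟨a, fun x hx => le_of_not_gt fun hxa =>
    lt_irrefl _ ((hx.trans (monotone_cdf μ hxa.le)).trans_lt ha)⟩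

lemma nonempty_setOf_le_cdf (hβ : β < 1) : {x | β ≤ cdf μ x}.Nonempty :=
  ((tendsto_cdf_atTop μ).eventually_const_le hβ).exists

lemma le_cdf_quantile (hβ : β ∈ Ioo 0 1) : β ≤ cdf μ (quantile μ β) := by
  have hright : ∀ x > quantile μ β, β ≤ cdf μ x := fun x hx => by
    obtain ⟨a, ha, hax⟩ := exists_lt_of_csInf_lt (nonempty_setOf_le_cdf hβ.2) hx
    exact ha.trans (monotone_cdf μ hax.le)
  exact ge_of_tendsto (((cdf μ).right_continuous _).mono Ioi_subset_Ici_self)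
    (eventually_nhdsWithin_of_forall hright)

lemma quantile_le_iff (hβ : β ∈ Ioo 0 1) {x : ℝ} : quantile μ β ≤ x ↔ β ≤ cdf μ x :=
  ⟨fun h => (le_cdf_quantile hβ).trans (monotone_cdf μ h),
    fun h => csInf_le (bddBelow_setOf_le_cdf hβ.1) h⟩

lemma monotoneOn_quantile : MonotoneOn (quantile μ) (Ioo 0 1) :=
  fun _ hβ _ hβ' h => (quantile_le_iff hβ).2 (h.trans (le_cdf_quantile hβ'))

lemma aemeasurable_quantile : AEMeasurable (quantile μ) (volume.restrict (Ioo 0 1)) :=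
  aemeasurable_restrict_of_monotoneOn measurableSet_Ioo monotoneOn_quantile

lemma cdf_quantile (hμ : Continuous (cdf μ)) (hβ : β ∈ Ioo 0 1) : cdf μ (quantile μ β) = β := by
  obtain ⟨x, hx⟩ : β ∈ range (cdf μ) := mem_range_of_exists_le_of_exists_ge hμ
    (((tendsto_cdf_atBot μ).eventually_le_const hβ.1).exists)
    (((tendsto_cdf_atTop μ).eventually_const_le hβ.2).exists)
  refine le_antisymm ?_ (le_cdf_quantile hβ)
  calc cdf μ (quantile μ β) ≤ cdf μ x := monotone_cdf μ ((quantile_le_iff hβ).2 hx.ge)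
    _ = β := hx

lemma preimage_quantile_Ici_inter_Ioo (hμ : Continuous (cdf μ)) (hα : α ∈ Ioo 0 1) :
    quantile μ ⁻¹' Ici (quantile μ α) ∩ Ioo 0 1 = Ico α 1 := by
  ext β
  simp only [mem_inter_iff, mem_preimage, mem_Ici, mem_Ico]
  constructor
  · rintro ⟨h, hβ⟩
    exact ⟨cdf_quantile hμ hβ ▸ (quantile_le_iff hα).1 h, hβ.2⟩
  · rintro ⟨hαβ, hβ1⟩
    have hβ : β ∈ Ioo 0 1 := ⟨hα.1.trans_le hαβ, hβ1⟩
    exact ⟨(quantile_le_iff hα).2 ((cdf_quantile hμ hβ).symm ▸ hαβ), hβ⟩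

lemma volume_Ioo_inter_Iic {c : ℝ} (hc : c ≤ 1) : volume (Ioo 0 1 ∩ Iic c) = ENNReal.ofReal c := by
  rw [measure_congr ((Ioo_ae_eq_Ioc (μ := volume)).inter (ae_eq_refl (Iic c))), Ioc_inter_Iic,
    inf_eq_right.2 hc, Real.volume_Ioc, sub_zero]

variable [IsProbabilityMeasure μ]

theorem map_quantile_volume : (volume.restrict (Ioo 0 1)).map (quantile μ) = μ := by
  have : IsProbabilityMeasure (volume.restrict (Ioo (0 : ℝ) 1)) := ⟨by simp⟩
  refine Measure.ext_of_Iic _ _ fun x => ?_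
  have hpre : quantile μ ⁻¹' Iic x ∩ Ioo 0 1 = Ioo 0 1 ∩ Iic (cdf μ x) := by
    ext β
    simp only [mem_inter_iff, mem_preimage, mem_Iic]
    exact ⟨fun ⟨h, hβ⟩ => ⟨hβ, (quantile_le_iff hβ).1 h⟩,
      fun ⟨hβ, h⟩ => ⟨(quantile_le_iff hβ).2 h, hβ⟩⟩
  rw [Measure.map_apply_of_aemeasurable aemeasurable_quantile measurableSet_Iic,
    Measure.restrict_apply' measurableSet_Ioo, hpre, volume_Ioo_inter_Iic (cdf_le_one μ x),
    ofReal_cdf]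

theorem map_quantile_volume_Ico (hμ : Continuous (cdf μ)) (hα : α ∈ Ioo 0 1) :
    (volume.restrict (Ico α 1)).map (quantile μ) = μ.restrict (Ici (quantile μ α)) := by
  rw [← preimage_quantile_Ici_inter_Ioo hμ hα, ← Measure.restrict_restrict' measurableSet_Ioo,
    ← Measure.restrict_map_of_aemeasurable aemeasurable_quantile measurableSet_Ici,
    map_quantile_volume]

lemma measure_Ici_quantile (hμ : Continuous (cdf μ)) (hα : α ∈ Ioo 0 1) :
    μ (Ici (quantile μ α)) = ENNReal.ofReal (1 - α) := by
  rw [← Measure.restrict_apply_univ, ← map_quantile_volume_Ico hμ hα,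
    Measure.map_apply_of_aemeasurable ?_ MeasurableSet.univ]
  · simp
  · exact aemeasurable_quantile.mono_set (Ico_subset_Ioo_left hα.1)

theorem setIntegral_Ici_quantile (hμ : Continuous (cdf μ)) (hα : α ∈ Ioo 0 1) :
    ∫ x in Ici (quantile μ α), x ∂μ = ∫ β in Ioo α 1, quantile μ β := by
  rw [setIntegral_congr_set Ioo_ae_eq_Ico, ← map_quantile_volume_Ico hμ hα]
  exact integral_map (aemeasurable_quantile.mono_set (Ico_subset_Ioo_left hα.1))
    aestronglyMeasurable_id

end ProbabilityTheory

lemma cdf_map_eq [IsProbabilityMeasure (ℙ : Measure Ω)] {S : Ω → ℝ} (hS : Measurable S) (x : ℝ) :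
    cdf (Measure.map S ℙ) x = (ℙ {ω | S ω ≤ x}).toReal := by
  have := Measure.isProbabilityMeasure_map (μ := (ℙ : Measure Ω)) hS.aemeasurable
  rw [cdf_eq_real, measureReal_def, Measure.map_apply hS measurableSet_Iic]
  rfl

lemma VaR_eq_quantile_map [IsProbabilityMeasure (ℙ : Measure Ω)] {S : Ω → ℝ} (hS : Measurable S)
    (β : ℝ) : VaR β S = quantile (Measure.map S ℙ) β := by
  simp only [VaR, quantile, cdf_map_eq hS]

theorem stmt0_general [IsProbabilityMeasure (ℙ : Measure Ω)]
    (S : Ω → ℝ) (hSmeas : Measurable S)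
    (F : ℝ → ℝ) (hF : ∀ x, F x = (ℙ {ω | S ω ≤ x}).toReal)
    (hcont : Continuous F)
    (α : ℝ) (hα : α ∈ Ioo (0:ℝ) 1) :
    (1 - α)⁻¹ * (∫ β in Ioo α 1, VaR β S)
      = (∫ ω in {ω | VaR α S ≤ S ω}, S ω) / (ℙ {ω | VaR α S ≤ S ω}).toReal := by
  have := Measure.isProbabilityMeasure_map (μ := (ℙ : Measure Ω)) hSmeas.aemeasurable
  have hcdf : Continuous (cdf (Measure.map S ℙ)) := by
    convert hcont using 1
    exact funext fun x => (cdf_map_eq hSmeas x).trans (hF x).symm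
  have hnum : ∫ ω in {ω | VaR α S ≤ S ω}, S ω = ∫ x in Ici (VaR α S), x ∂(Measure.map S ℙ) :=
    (setIntegral_map measurableSet_Ici aestronglyMeasurable_id hSmeas.aemeasurable).symm
  have hden : ℙ {ω | VaR α S ≤ S ω} = Measure.map S ℙ (Ici (VaR α S)) :=
    (Measure.map_apply hSmeas measurableSet_Ici).symm
  simp_rw [hnum, hden, VaR_eq_quantile_map hSmeas, setIntegral_Ici_quantile hcdf hα,
    measure_Ici_quantile hcdf hα, ENNReal.toReal_ofReal (sub_nonneg.2 hα.2.le), div_eq_inv_mul]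

/-- ES_α(S) = (1/(1-α)) ∫_α^1 VaR_β(S) dβ equals E[S | S ≥ VaR_α(S)]. -/
theorem stmt0 [IsProbabilityMeasure (ℙ : Measure Ω)]
    (S : Ω → ℝ) (hSmeas : Measurable S) (hSint : Integrable S ℙ)
    (F : ℝ → ℝ) (hF : ∀ x, F x = (ℙ {ω | S ω ≤ x}).toReal)
    (hcont : Continuous F)
    (hmono : StrictMonoOn F {x | F x ∈ Ioo 0 1})
    (α : ℝ) (hα : α ∈ Ioo (0:ℝ) 1) :
    (1 - α)⁻¹ * (∫ β in Ioo α 1, VaR β S)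
      = (∫ ω in {ω | VaR α S ≤ S ω}, S ω) / (ℙ {ω | VaR α S ≤ S ω}).toReal :=
  stmt0_general S hSmeas F hF hcont α hα
end

section
/- Mixture representation of the ESC scoring function: For φ : ℝ → ℝ convex differentiable with derivative φ', v ∈ ℝ, m ∈ ℝ, and x = (x_1,...,x_d) ∈ ℝ^d with s = x_1 + ... + x_d, the score S^ESC((m,v),x) = 1{s > v}(φ'(m)(m - x_j) - φ(m) + φ(x_j)) equals ∫_ℝ S_η((m,v),x) dφ'(η), where S_η((m,v),x) = 1{s > v}(x_j - η) if m ≤ η < x_j, S_η((m,v),x) = 1{s > v}(η - x_j) if x_j ≤ η < m, and S_η((m,v),x) = 0 otherwise. -/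
/-!
On `{s > v}` the integrand is `x_j - η` on `[m, x_j)` or `η - x_j` on `[x_j, m)`. Writing
`b - η = ∫_η^b ds` and exchanging the integrals (layer cake) gives
`∫_{(a,b]} (b - η) dφ'(η) = ∫_a^b (φ'(s) - φ'(a)) ds`, which by the fundamental theorem of calculus
is the Bregman divergence `φ b - φ a - φ' a (b - a)`; the other case is symmetric. Continuity of
`φ'` makes the endpoints null, so `[a, b)` and `(a, b]` may be interchanged.
-/

open MeasureTheory Set

/-- Elementary scoring function for the `j`-th ES contribution. -/
noncomputable def elemESC {d : ℕ} (j : Fin d) (m v η : ℝ) (x : Fin d → ℝ) : ℝ :=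
  if v < ∑ i, x i then
    if m ≤ η ∧ η < x j then x j - η
    else if x j ≤ η ∧ η < m then η - x j
    else 0
  else 0

namespace StieltjesFunction

variable (f : StieltjesFunction ℝ) {a b : ℝ}

theorem measureReal_restrict_Ioc_le_sub {t : ℝ} (ht : t ∈ Icc 0 (b - a)) :
    (f.measure.restrict (Ioc a b)).real {η | t ≤ b - η} = f (b - t) - f a := by
  have hIic : {η | t ≤ b - η} = Iic (b - t) := by
    ext η; simp only [mem_ofPred_eq, mem_Iic]; constructor <;> intro <;> linarith
  rw [measureReal_def, hIic, Measure.restrict_apply measurableSet_Iic,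
    Iic_inter_Ioc_of_le (by linarith [ht.1]), f.measure_Ioc,
    ENNReal.toReal_ofReal (sub_nonneg.2 (f.mono (by linarith [ht.2])))]

theorem integral_Ioc_sub_eq_intervalIntegral (hab : a ≤ b) :
    ∫ η in Ioc a b, (b - η) ∂f.measure = ∫ s in a..b, (f s - f a) := by
  have hint : IntegrableOn (fun η => b - η) (Ioc a b) f.measure :=
    (continuous_const.sub continuous_id).continuousOn.integrableOn_compact isCompact_Icc
      |>.mono_set Ioc_subset_Icc_self
  have hnn : 0 ≤ᵐ[f.measure.restrict (Ioc a b)] fun η => b - η :=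
    (ae_restrict_mem measurableSet_Ioc).mono fun η hη => sub_nonneg.2 hη.2
  have hle : (fun η => b - η) ≤ᵐ[f.measure.restrict (Ioc a b)] fun _ => b - a :=
    (ae_restrict_mem measurableSet_Ioc).mono fun η hη => by linarith [hη.1]
  have hsub : ∫ s in a..b, (f s - f a) = ∫ t in 0..b - a, (f (b - t) - f a) := by
    simp [intervalIntegral.integral_comp_sub_left (fun s => f s - f a) b]
  rw [hint.integral_eq_integral_Ioc_meas_le hnn hle, hsub,
    intervalIntegral.integral_of_le (sub_nonneg.2 hab)]
  exact setIntegral_congr_fun measurableSet_Ioc fun t ht =>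
    f.measureReal_restrict_Ioc_le_sub (Ioc_subset_Icc_self ht)

theorem integral_Ioc_sub_left_eq_intervalIntegral (hab : a ≤ b) :
    ∫ η in Ioc a b, (η - a) ∂f.measure = ∫ s in a..b, (f b - f s) := by
  have hint : IntegrableOn (fun η => b - η) (Ioc a b) f.measure :=
    (continuous_const.sub continuous_id).continuousOn.integrableOn_compact isCompact_Icc
      |>.mono_set Ioc_subset_Icc_self
  have hconst : IntegrableOn (fun _ => b - a) (Ioc a b) f.measure :=
    integrableOn_const (by simp [f.measure_Ioc])
  have hfint : IntervalIntegrable f volume a b := f.mono.intervalIntegrable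
  rw [setIntegral_congr_fun measurableSet_Ioc fun η _ => (sub_sub_sub_cancel_left a η b).symm,
    integral_sub hconst hint, setIntegral_const,
    f.integral_Ioc_sub_eq_intervalIntegral hab, measureReal_def, f.measure_Ioc,
    ENNReal.toReal_ofReal (sub_nonneg.2 (f.mono hab)),
    intervalIntegral.integral_sub hfint intervalIntegrable_const,
    intervalIntegral.integral_sub intervalIntegrable_const hfint]
  simp only [intervalIntegral.integral_const, smul_eq_mul]
  ring

theorem nullSingletonClass_measure_of_continuous (hf : Continuous f) :
    NullSingletonClass f.measure where
  measure_singleton x := by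
    rw [f.measure_singleton, f.mono.continuousWithinAt_Iio_iff_leftLim_eq.mp
      hf.continuousAt.continuousWithinAt, sub_self, ENNReal.ofReal_zero]

theorem integral_Ico_sub_eq_of_hasDerivAt (hf : Continuous f) {φ : ℝ → ℝ}
    (hφ : ∀ y, HasDerivAt φ (f y) y) (hab : a ≤ b) :
    ∫ η in Ico a b, (b - η) ∂f.measure = φ b - φ a - f a * (b - a) := by
  have := f.nullSingletonClass_measure_of_continuous hf
  have hfint : IntervalIntegrable f volume a b := f.mono.intervalIntegrable
  rw [setIntegral_congr_set Ico_ae_eq_Ioc, f.integral_Ioc_sub_eq_intervalIntegral hab,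
    intervalIntegral.integral_sub hfint intervalIntegrable_const,
    intervalIntegral.integral_eq_sub_of_hasDerivAt (fun y _ => hφ y) hfint,
    intervalIntegral.integral_const, smul_eq_mul]
  ring

theorem integral_Ico_sub_left_eq_of_hasDerivAt (hf : Continuous f) {φ : ℝ → ℝ}
    (hφ : ∀ y, HasDerivAt φ (f y) y) (hab : a ≤ b) :
    ∫ η in Ico a b, (η - a) ∂f.measure = f b * (b - a) - (φ b - φ a) := by
  have := f.nullSingletonClass_measure_of_continuous hf
  have hfint : IntervalIntegrable f volume a b := f.mono.intervalIntegrable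
  rw [setIntegral_congr_set Ico_ae_eq_Ioc, f.integral_Ioc_sub_left_eq_intervalIntegral hab,
    intervalIntegral.integral_sub intervalIntegrable_const hfint,
    intervalIntegral.integral_eq_sub_of_hasDerivAt (fun y _ => hφ y) hfint,
    intervalIntegral.integral_const, smul_eq_mul]
  ring

end StieltjesFunction

section elemESC

variable {d : ℕ} (j : Fin d) {m v : ℝ} {x : Fin d → ℝ}

theorem elemESC_eq_indicator_of_le (hv : v < ∑ i, x i) (hm : m ≤ x j) :
    (fun η => elemESC j m v η x) = (Ico m (x j)).indicator fun η => x j - η := by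
  ext η
  have hother : ¬(x j ≤ η ∧ η < m) := fun h => by linarith [h.1, h.2]
  simp only [elemESC, if_pos hv, if_neg hother, indicator_apply, mem_Ico]

theorem elemESC_eq_indicator_of_lt (hv : v < ∑ i, x i) (hm : x j < m) :
    (fun η => elemESC j m v η x) = (Ico (x j) m).indicator fun η => η - x j := by
  ext η
  have hother : ¬(m ≤ η ∧ η < x j) := fun h => by linarith [h.1, h.2]
  simp only [elemESC, if_pos hv, if_neg hother, indicator_apply, mem_Ico]

end elemESC

theorem stmt3_general (d : ℕ) (j : Fin d) (φ φ' : ℝ → ℝ)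
    (hderiv : ∀ y, HasDerivAt φ (φ' y) y)
    (hcont : Continuous φ')
    (f : StieltjesFunction ℝ) (hf : ∀ y, f y = φ' y)
    (m v : ℝ) (x : Fin d → ℝ) :
    (if v < ∑ i, x i then φ' m * (m - x j) - φ m + φ (x j) else 0)
      = ∫ η, elemESC j m v η x ∂f.measure := by
  have hφ : ∀ y, HasDerivAt φ (f y) y := fun y => hf y ▸ hderiv y
  have hfc : Continuous f := hcont.congr fun y => (hf y).symm
  by_cases hv : v < ∑ i, x i
  swap
  · simp [elemESC, hv]
  rw [if_pos hv]
  rcases le_or_gt m (x j) with hmx | hmx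
  · rw [elemESC_eq_indicator_of_le j hv hmx, integral_indicator measurableSet_Ico,
      f.integral_Ico_sub_eq_of_hasDerivAt hfc hφ hmx, hf]
    ring
  · rw [elemESC_eq_indicator_of_lt j hv hmx, integral_indicator measurableSet_Ico,
      f.integral_Ico_sub_left_eq_of_hasDerivAt hfc hφ hmx.le, hf]
    ring

/-- Mixture representation of the ESC scoring function:
`S^ESC((m,v),x) = ∫_ℝ S_η((m,v),x) dφ'(η)`. -/
theorem stmt3 (d : ℕ) (j : Fin d) (φ φ' : ℝ → ℝ)
    (hconv : ConvexOn ℝ Set.univ φ)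
    (hderiv : ∀ y, HasDerivAt φ (φ' y) y)
    (hmono : Monotone φ') (hcont : Continuous φ')
    (f : StieltjesFunction ℝ) (hf : ∀ y, f y = φ' y)
    (m v : ℝ) (x : Fin d → ℝ) :
    (if v < ∑ i, x i then φ' m * (m - x j) - φ m + φ (x j) else 0)
      = ∫ η, elemESC j m v η x ∂f.measure :=
  stmt3_general d j φ φ' hderiv hcont f hf m v x
end

section
/- Pointwise ordering of expected elementary ESC scores: Let X be an integrable d-dimensional random vector with S = X_1 + ... + X_d, v ∈ ℝ with P(S > v) > 0, and fix j. For any forecasts m* < m and any η ∈ ℝ, E[S_η((m*,v),X)] - E[S_η((m,v),X)] = P(S > v)·(E[X_j | S > v] - η)·(1{m* ≤ η} - 1{m ≤ η}), which is nonnegative for all η whenever m ≤ E[X_j | S > v], and strictly positive for m* < η < min(m, E[X_j | S > v]). -/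
open MeasureTheory ProbabilityTheory Set

variable {Ω : Type*} [MeasureSpace Ω]

/-!
Changing the forecast from `m` to `m*` alters the elementary score only when `η` lies between
the two, and then by `±1{s > v} (x_j - η)`. Taking expectations, the difference of expected
scores is that sign times `E[X_j 1{S > v}] - η P(S > v) = P(S > v) (E[X_j | S > v] - η)`,
which is positive exactly when `η` lies below the conditional mean.
-/

section ElementaryScore

variable {d : ℕ} (j : Fin d) (v η : ℝ)

theorem measurable_elemESC (m : ℝ) : Measurable (elemESC j m v η) := by
  have hsum : Measurable fun x : Fin d → ℝ => ∑ i, x i :=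
    Finset.measurable_sum _ fun i _ => measurable_pi_apply i
  have hj : Measurable fun x : Fin d → ℝ => x j := measurable_pi_apply j
  unfold elemESC
  refine Measurable.ite (measurableSet_lt measurable_const hsum) ?_ measurable_const
  refine Measurable.ite ?_ (hj.sub measurable_const) ?_
  · exact (MeasurableSet.const _).inter (measurableSet_lt measurable_const hj)
  refine Measurable.ite ?_ (measurable_const.sub hj) measurable_const
  exact (measurableSet_le hj measurable_const).inter (MeasurableSet.const _)

theorem abs_elemESC_le (m : ℝ) (x : Fin d → ℝ) : |elemESC j m v η x| ≤ |x j| + |η| := by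
  have h : |x j - η| ≤ |x j| + |η| := abs_sub _ _
  unfold elemESC
  split_ifs
  · exact h
  · rwa [abs_sub_comm]
  all_goals simp only [abs_zero]; positivity

theorem elemESC_sub_elemESC (a b : ℝ) (x : Fin d → ℝ) :
    elemESC j a v η x - elemESC j b v η x
      = (if v < ∑ i, x i then x j - η else 0)
          * ((if a ≤ η then (1:ℝ) else 0) - (if b ≤ η then (1:ℝ) else 0)) := by
  unfold elemESC
  split_ifs <;> grind

end ElementaryScore

section Expectation

variable {α : Type*} [MeasurableSpace α] {μ : Measure α} [IsFiniteMeasure μ]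
  {d : ℕ} {X : Fin d → α → ℝ} (j : Fin d) (v η : ℝ)

theorem integrable_elemESC (hX : ∀ i, Integrable (X i) μ) (m : ℝ) :
    Integrable (fun ω => elemESC j m v η (fun i => X i ω)) μ := by
  have hmeas : AEMeasurable (fun ω i => X i ω) μ :=
    aemeasurable_pi_lambda _ fun i => (hX i).aemeasurable
  refine ((hX j).abs.add (integrable_const |η|)).mono'
    ((measurable_elemESC j v η m).comp_aemeasurable hmeas).aestronglyMeasurable ?_
  exact Filter.Eventually.of_forall fun ω => abs_elemESC_le j v η m _

theorem integral_elemESC_sub_integral_elemESC (hX : ∀ i, Integrable (X i) μ) (a b : ℝ) :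
    (∫ ω, elemESC j a v η (fun i => X i ω) ∂μ) - (∫ ω, elemESC j b v η (fun i => X i ω) ∂μ)
      = ((∫ ω in {ω | v < ∑ i, X i ω}, X j ω ∂μ) - η * μ.real {ω | v < ∑ i, X i ω})
          * ((if a ≤ η then (1:ℝ) else 0) - (if b ≤ η then (1:ℝ) else 0)) := by
  set A := {ω | v < ∑ i, X i ω}
  have hA : NullMeasurableSet A μ :=
    nullMeasurableSet_lt aemeasurable_const
      (Finset.aemeasurable_fun_sum _ fun i _ => (hX i).aemeasurable)
  have hindicator : ∀ ω, (if v < ∑ i, X i ω then X j ω - η else 0)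
      = A.indicator (fun ω => X j ω - η) ω := fun ω => by
    simp only [indicator_apply, A, mem_ofPred_eq]
  simp only [← integral_sub (integrable_elemESC j v η hX a) (integrable_elemESC j v η hX b),
    elemESC_sub_elemESC, hindicator, integral_mul_const, integral_indicator₀ hA]
  rw [integral_sub (hX j).integrableOn (integrableOn_const (measure_ne_top μ A)),
    setIntegral_const, smul_eq_mul, mul_comm η]

end Expectation

theorem ite_le_sub_ite_le_of_lt {a b η : ℝ} (hab : a < b) :
    ((if a ≤ η then (1:ℝ) else 0) - (if b ≤ η then (1:ℝ) else 0))
      = if a ≤ η ∧ η < b then 1 else 0 := by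
  by_cases ha : a ≤ η <;> by_cases hb : b ≤ η <;> simp [ha, hb]; linarith

theorem stmt5_general [IsProbabilityMeasure (ℙ : Measure Ω)]
    (d : ℕ) (X : Fin d → Ω → ℝ)
    (hXint : ∀ i, Integrable (X i) ℙ)
    (j : Fin d) (v : ℝ)
    (hv : 0 < (ℙ {ω | v < ∑ i, X i ω}).toReal)
    (m mstar : ℝ) (hmm : mstar < m) (η : ℝ) :
    (∫ ω, elemESC j mstar v η (fun i => X i ω)) - (∫ ω, elemESC j m v η (fun i => X i ω))
        = (ℙ {ω | v < ∑ i, X i ω}).toReal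
            * ((∫ ω in {ω | v < ∑ i, X i ω}, X j ω) / (ℙ {ω | v < ∑ i, X i ω}).toReal - η)
            * ((if mstar ≤ η then (1:ℝ) else 0) - (if m ≤ η then (1:ℝ) else 0))
    ∧ (m ≤ (∫ ω in {ω | v < ∑ i, X i ω}, X j ω) / (ℙ {ω | v < ∑ i, X i ω}).toReal →
        0 ≤ (∫ ω, elemESC j mstar v η (fun i => X i ω))
              - (∫ ω, elemESC j m v η (fun i => X i ω)))
    ∧ (mstar < η →
        η < min m ((∫ ω in {ω | v < ∑ i, X i ω}, X j ω) / (ℙ {ω | v < ∑ i, X i ω}).toReal) →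
        0 < (∫ ω, elemESC j mstar v η (fun i => X i ω))
              - (∫ ω, elemESC j m v η (fun i => X i ω))) := by
  set P := (ℙ {ω | v < ∑ i, X i ω}).toReal
  set E := (∫ ω in {ω | v < ∑ i, X i ω}, X j ω) / P
  have hdiff : (∫ ω, elemESC j mstar v η (fun i => X i ω))
        - (∫ ω, elemESC j m v η (fun i => X i ω))
      = P * (E - η) * ((if mstar ≤ η then (1:ℝ) else 0) - (if m ≤ η then (1:ℝ) else 0)) := by
    rw [integral_elemESC_sub_integral_elemESC j v η hXint, measureReal_def, mul_sub P,
      mul_div_cancel₀ _ hv.ne', mul_comm P η]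
  rw [hdiff, ite_le_sub_ite_le_of_lt hmm]
  refine ⟨rfl, fun hmE => ?_, fun hη hηmin => ?_⟩
  · split_ifs with hη
    · have : 0 < E - η := by linarith [hη.2]
      positivity
    · rw [mul_zero]
  · rw [lt_min_iff] at hηmin
    rw [if_pos ⟨hη.le, hηmin.1⟩, mul_one]
    exact mul_pos hv (sub_pos.2 hηmin.2)

/-- Pointwise ordering of expected elementary ESC scores. -/
theorem stmt5 [IsProbabilityMeasure (ℙ : Measure Ω)]
    (d : ℕ) (X : Fin d → Ω → ℝ)
    (hXmeas : ∀ i, Measurable (X i)) (hXint : ∀ i, Integrable (X i) ℙ)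
    (j : Fin d) (v : ℝ)
    (hv : 0 < (ℙ {ω | v < ∑ i, X i ω}).toReal)
    (m mstar : ℝ) (hmm : mstar < m) (η : ℝ) :
    (∫ ω, elemESC j mstar v η (fun i => X i ω)) - (∫ ω, elemESC j m v η (fun i => X i ω))
        = (ℙ {ω | v < ∑ i, X i ω}).toReal
            * ((∫ ω in {ω | v < ∑ i, X i ω}, X j ω) / (ℙ {ω | v < ∑ i, X i ω}).toReal - η)
            * ((if mstar ≤ η then (1:ℝ) else 0) - (if m ≤ η then (1:ℝ) else 0))
    ∧ (m ≤ (∫ ω in {ω | v < ∑ i, X i ω}, X j ω) / (ℙ {ω | v < ∑ i, X i ω}).toReal →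
        0 ≤ (∫ ω, elemESC j mstar v η (fun i => X i ω))
              - (∫ ω, elemESC j m v η (fun i => X i ω)))
    ∧ (mstar < η →
        η < min m ((∫ ω in {ω | v < ∑ i, X i ω}, X j ω) / (ℙ {ω | v < ∑ i, X i ω}).toReal) →
        0 < (∫ ω, elemESC j mstar v η (fun i => X i ω))
              - (∫ ω, elemESC j m v η (fun i => X i ω))) :=
  stmt5_general d X hXint j v hv m mstar hmm η
end

section
/- Order sensitivity for correctly specified VaR: Let X ∈ ℝ^d be integrable with S = X_1+...+X_d, v ∈ ℝ with P(S > v) > 0, and set m̃ = E[X_j | S > v]. Let φ be strictly convex differentiable and S^ESC((m,v),x) = 1{s>v}(φ'(m)(m - x_j) - φ(m) + φ(x_j)). If m* < m ≤ m̃ or m̃ ≤ m < m*, then E[S^ESC((m,v),X)] < E[S^ESC((m*,v),X)]. -/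
open MeasureTheory ProbabilityTheory Set

variable {Ω : Type*} [MeasureSpace Ω]

/-!
Subtracting the two scores leaves a function that is affine in `x_j`, so on `{s > v}` its
expectation only sees the conditional mean `m̃`: the expected score difference is
`P(S > v) (D(m̃, m) - D(m̃, m*))`, with `D` the Bregman divergence of `φ`. Moreover
`D(m̃, m*) - D(m̃, m) = D(m, m*) + (φ'(m) - φ'(m*)) (m̃ - m)`, where the first term is positive by
strict convexity and the second is nonnegative because `φ'` is increasing and `m` lies between
`m*` and `m̃`.
-/

def bregmanDiv (φ φ' : ℝ → ℝ) (x y : ℝ) : ℝ := φ x - φ y - φ' y * (x - y)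

-- The ESC score of the paper with its factor `1{s > v}` dropped.
def escScore (φ φ' : ℝ → ℝ) (m x : ℝ) : ℝ := φ' m * (m - x) - φ m + φ x

lemma escScore_sub_escScore (φ φ' : ℝ → ℝ) (t m m' x : ℝ) :
    escScore φ φ' m x - escScore φ φ' m' x
      = bregmanDiv φ φ' t m - bregmanDiv φ φ' t m' + (φ' m - φ' m') * (t - x) := by
  unfold escScore bregmanDiv
  ring

namespace StrictConvexOn

variable {φ φ' : ℝ → ℝ} (hconv : StrictConvexOn ℝ univ φ) (hderiv : ∀ y, HasDerivAt φ (φ' y) y)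
include hconv hderiv

lemma strictMono_of_hasDerivAt : StrictMono φ' := by
  have h := hconv.strictMonoOn_deriv fun x _ => (hderiv x).differentiableAt
  rwa [show deriv φ = φ' from funext fun y => (hderiv y).deriv, strictMonoOn_univ] at h

lemma bregmanDiv_pos {x y : ℝ} (hxy : x ≠ y) : 0 < bregmanDiv φ φ' x y := by
  unfold bregmanDiv
  rcases hxy.lt_or_gt with h | h
  · have := hconv.slope_lt_of_hasDerivAt (mem_univ x) (mem_univ y) h (hderiv y)
    rw [slope_def_field, div_lt_iff₀ (sub_pos.mpr h)] at this
    nlinarith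
  · have := hconv.lt_slope_of_hasDerivAt (mem_univ y) (mem_univ x) h (hderiv y)
    rw [slope_def_field, lt_div_iff₀ (sub_pos.mpr h)] at this
    linarith

lemma bregmanDiv_lt_bregmanDiv {t m m' : ℝ} (hm : (m' < m ∧ m ≤ t) ∨ (t ≤ m ∧ m < m')) :
    bregmanDiv φ φ' t m < bregmanDiv φ φ' t m' := by
  have hsplit : bregmanDiv φ φ' t m' - bregmanDiv φ φ' t m
      = bregmanDiv φ φ' m m' + (φ' m - φ' m') * (t - m) := by
    unfold bregmanDiv
    ring
  have hpos : 0 < bregmanDiv φ φ' m m' :=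
    hconv.bregmanDiv_pos hderiv (by rcases hm with ⟨h, _⟩ | ⟨_, h⟩ <;> [exact h.ne'; exact h.ne])
  have hmono := hconv.strictMono_of_hasDerivAt hderiv
  have hcross : 0 ≤ (φ' m - φ' m') * (t - m) := by
    rcases hm with ⟨hlt, hle⟩ | ⟨hle, hlt⟩
    · exact mul_nonneg (sub_nonneg.mpr (hmono hlt).le) (sub_nonneg.mpr hle)
    · exact mul_nonneg_of_nonpos_of_nonpos (sub_nonpos.mpr (hmono hlt).le) (sub_nonpos.mpr hle)
  linarith

end StrictConvexOn

lemma setIntegral_escScore_sub_setIntegral_escScore {α : Type*} [MeasurableSpace α]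
    {μ : Measure α} {A : Set α} {Y : α → ℝ} (φ φ' : ℝ → ℝ) {m m' : ℝ} (hA : μ A ≠ ⊤)
    (hY : IntegrableOn Y A μ) (hm : IntegrableOn (fun ω => escScore φ φ' m (Y ω)) A μ)
    (hm' : IntegrableOn (fun ω => escScore φ φ' m' (Y ω)) A μ) :
    ∫ ω in A, escScore φ φ' m (Y ω) ∂μ - ∫ ω in A, escScore φ φ' m' (Y ω) ∂μ
      = μ.real A *
        (bregmanDiv φ φ' (⨍ ω in A, Y ω ∂μ) m - bregmanDiv φ φ' (⨍ ω in A, Y ω ∂μ) m') := by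
  set t := ⨍ ω in A, Y ω ∂μ
  rw [← integral_sub hm hm']
  simp_rw [escScore_sub_escScore φ φ' t]
  have hconst : ∀ c : ℝ, IntegrableOn (fun _ => c) A μ := fun c => integrableOn_const hA
  have hdev : IntegrableOn (fun ω => t - Y ω) A μ := (hconst t).sub hY
  rw [integral_add (hconst _) (hdev.const_mul _), integral_const_mul,
    setIntegral_setAverage_sub hA hY, mul_zero, add_zero, setIntegral_const, smul_eq_mul]

theorem stmt6_general
    (d : ℕ) (X : Fin d → Ω → ℝ)
    (hXmeas : ∀ i, Measurable (X i)) (hXint : ∀ i, Integrable (X i) ℙ)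
    (j : Fin d) (v : ℝ)
    (hv : 0 < (ℙ {ω | v < ∑ i, X i ω}).toReal)
    (φ φ' : ℝ → ℝ)
    (hconv : StrictConvexOn ℝ Set.univ φ)
    (hderiv : ∀ y, HasDerivAt φ (φ' y) y)
    (hint : ∀ m : ℝ, Integrable
      (fun ω => if v < ∑ i, X i ω then φ' m * (m - X j ω) - φ m + φ (X j ω) else 0) ℙ)
    (m mstar : ℝ)
    (hcase : (mstar < m ∧
        m ≤ (∫ ω in {ω | v < ∑ i, X i ω}, X j ω) / (ℙ {ω | v < ∑ i, X i ω}).toReal)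
      ∨ ((∫ ω in {ω | v < ∑ i, X i ω}, X j ω) / (ℙ {ω | v < ∑ i, X i ω}).toReal ≤ m
          ∧ m < mstar)) :
    (∫ ω, if v < ∑ i, X i ω then φ' m * (m - X j ω) - φ m + φ (X j ω) else 0)
      < ∫ ω, if v < ∑ i, X i ω then φ' mstar * (mstar - X j ω) - φ mstar + φ (X j ω) else 0 := by
  set A := {ω | v < ∑ i, X i ω}
  have hA : MeasurableSet A :=
    measurableSet_lt measurable_const (Finset.measurable_sum _ fun i _ => hXmeas i)
  have hAfin : ℙ A ≠ ⊤ := (ENNReal.toReal_pos_iff.mp hv).2.ne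
  have hmean : (∫ ω in A, X j ω) / (ℙ A).toReal = ⨍ ω in A, X j ω := by
    rw [setAverage_eq, measureReal_def, smul_eq_mul, div_eq_inv_mul]
  have hscore : ∀ m, (fun ω => if v < ∑ i, X i ω then φ' m * (m - X j ω) - φ m + φ (X j ω) else 0)
      = A.indicator (fun ω => escScore φ φ' m (X j ω)) := fun m => by
    funext ω
    simp only [indicator_apply, escScore, A, mem_ofPred_eq]
  have hintOn : ∀ m, IntegrableOn (fun ω => escScore φ φ' m (X j ω)) A ℙ := fun m =>
    (integrable_indicator_iff hA).mp (hscore m ▸ hint m)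
  rw [hscore, hscore, integral_indicator hA, integral_indicator hA, ← sub_neg,
    setIntegral_escScore_sub_setIntegral_escScore φ φ' hAfin (hXint j).integrableOn (hintOn m)
      (hintOn mstar)]
  exact mul_neg_of_pos_of_neg hv
    (sub_neg.mpr (hconv.bregmanDiv_lt_bregmanDiv hderiv (hmean ▸ hcase)))

/-- Order sensitivity of the ESC score for correctly specified VaR. -/
theorem stmt6 [IsProbabilityMeasure (ℙ : Measure Ω)]
    (d : ℕ) (X : Fin d → Ω → ℝ)
    (hXmeas : ∀ i, Measurable (X i)) (hXint : ∀ i, Integrable (X i) ℙ)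
    (j : Fin d) (v : ℝ)
    (hv : 0 < (ℙ {ω | v < ∑ i, X i ω}).toReal)
    (φ φ' : ℝ → ℝ)
    (hconv : StrictConvexOn ℝ Set.univ φ)
    (hderiv : ∀ y, HasDerivAt φ (φ' y) y)
    (hint : ∀ m : ℝ, Integrable
      (fun ω => if v < ∑ i, X i ω then φ' m * (m - X j ω) - φ m + φ (X j ω) else 0) ℙ)
    (m mstar : ℝ)
    (hcase : (mstar < m ∧
        m ≤ (∫ ω in {ω | v < ∑ i, X i ω}, X j ω) / (ℙ {ω | v < ∑ i, X i ω}).toReal)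
      ∨ ((∫ ω in {ω | v < ∑ i, X i ω}, X j ω) / (ℙ {ω | v < ∑ i, X i ω}).toReal ≤ m
          ∧ m < mstar)) :
    (∫ ω, if v < ∑ i, X i ω then φ' m * (m - X j ω) - φ m + φ (X j ω) else 0)
      < ∫ ω, if v < ∑ i, X i ω then φ' mstar * (mstar - X j ω) - φ mstar + φ (X j ω) else 0 :=
  stmt6_general d X hXmeas hXint j v hv φ φ' hconv hderiv hint m mstar hcase
end

section
/- Strict consistency of the generalized pinball loss: Let S be an integrable random variable with continuous strictly increasing CDF, α ∈ (0,1), and h : ℝ → ℝ strictly increasing with E|h(S)| < ∞. Then v ↦ E[(1{S ≤ v} - α)(h(v) - h(S))] is uniquely minimized at v = VaR_α(S). -/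
open MeasureTheory ProbabilityTheory Set

variable {Ω : Type*} [MeasureSpace Ω]

/-! Against the quantile `q = VaR_α(S)` the expected score difference splits as
`E[(1{S ≤ v} - 1{S ≤ q}) (h v - h S)] + (F q - α) (h v - h q)`. Continuity of `F` gives
`F q = α`, which kills the second term. The first integrand is nonnegative, and positive when `S`
lies strictly between `v` and `q`; as `F` has no atoms that event has probability `|F v - F q|`,
which is positive because `F` is injective on the level set `{0 < F < 1}` containing `q`. -/

open Filter

section Quantile

variable {μ : Measure ℝ}

theorem cdf_sInf_eq_of_continuous (hcont : Continuous (cdf μ)) {α : ℝ} (hα : α ∈ Ioo 0 1) :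
    cdf μ (sInf {x | α ≤ cdf μ x}) = α := by
  set A := {x | α ≤ cdf μ x}
  obtain ⟨x₁, hx₁⟩ := ((tendsto_cdf_atTop μ).eventually (eventually_gt_nhds hα.2)).exists
  obtain ⟨x₀, hx₀⟩ := ((tendsto_cdf_atBot μ).eventually (eventually_lt_nhds hα.1)).exists
  have hbdd : BddBelow A := ⟨x₀, fun y hy => ((cdf μ).mono.reflect_lt (hx₀.trans_le hy)).le⟩
  refine le_antisymm ?_ ((isClosed_le continuous_const hcont).csInf_mem ⟨x₁, hx₁.le⟩ hbdd)
  have hbelow : Iio (sInf A) ⊆ {x | cdf μ x ≤ α} := fun x hx =>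
    show cdf μ x ≤ α from (not_le.1 (notMem_of_lt_csInf (s := A) hx hbdd)).le
  exact (isClosed_le hcont continuous_const).closure_subset_iff.2 hbelow
    (closure_Iio (sInf A) ▸ self_mem_Iic)

theorem measure_uIoo_pos_of_cdf_ne [IsProbabilityMeasure μ] (hcont : Continuous (cdf μ))
    {a b : ℝ} (hab : cdf μ a ≠ cdf μ b) : 0 < μ (uIoo a b) := by
  wlog hle : a ≤ b generalizing a b
  · rw [uIoo_comm]; exact this hab.symm (le_of_not_ge hle)
  rw [uIoo_of_le hle, ← measure_cdf (μ := μ), StieltjesFunction.measure_Ioo,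
    ((cdf μ).mono.continuousWithinAt_Iio_iff_leftLim_eq).1 hcont.continuousWithinAt,
    ENNReal.ofReal_pos, sub_pos]
  exact lt_of_le_of_ne ((cdf μ).mono hle) hab

end Quantile

noncomputable def pinballScore (h : ℝ → ℝ) (α v s : ℝ) : ℝ :=
  ((if s ≤ v then 1 else 0) - α) * (h v - h s)

noncomputable def pinballExcess (h : ℝ → ℝ) (v q s : ℝ) : ℝ :=
  ((if s ≤ v then 1 else 0) - (if s ≤ q then 1 else 0)) * (h v - h s)

section PinballLoss

variable {h : ℝ → ℝ} {v q s : ℝ}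

theorem pinballScore_sub_pinballScore (α : ℝ) :
    pinballScore h α v s - pinballScore h α q s
      = pinballExcess h v q s + ((if s ≤ q then 1 else 0) - α) * (h v - h q) := by
  simp only [pinballScore, pinballExcess]
  ring

theorem pinballExcess_nonneg (hh : Monotone h) : 0 ≤ pinballExcess h v q s := by
  unfold pinballExcess
  split_ifs with hv hq hq
  · simp
  · simpa using hh hv
  · simpa using hh (not_le.1 hv).le
  · simp

theorem pinballExcess_pos (hh : StrictMono h) (hs : s ∈ uIoo v q) :
    0 < pinballExcess h v q s := by
  rcases lt_or_gt_of_ne (nonempty_uIoo.1 ⟨s, hs⟩) with hvq | hqv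
  · rw [uIoo_of_lt hvq] at hs
    simpa [pinballExcess, not_le.2 hs.1, hs.2.le] using hh hs.1
  · rw [uIoo_of_gt hqv] at hs
    simpa [pinballExcess, hs.2.le, not_le.2 hs.1] using hh hs.2

variable {X : Type*} [MeasurableSpace X] {μ : Measure X} [IsProbabilityMeasure μ] {S : X → ℝ}

theorem integrable_bdd_comp_mul_const_sub {g : ℝ → ℝ} {C : ℝ} (hS : Measurable S)
    (hhS : Integrable (fun x => h (S x)) μ) (hg : Measurable g) (hgC : ∀ s, ‖g s‖ ≤ C) (c : ℝ) :
    Integrable (fun x => g (S x) * (c - h (S x))) μ :=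
  ((integrable_const c).sub hhS).bdd_mul (hg.comp hS).aestronglyMeasurable
    (Eventually.of_forall fun x => hgC (S x))

theorem integrable_pinballScore (hS : Measurable S) (hhS : Integrable (fun x => h (S x)) μ)
    (α v : ℝ) : Integrable (fun x => pinballScore h α v (S x)) μ := by
  refine integrable_bdd_comp_mul_const_sub (g := fun s => (if s ≤ v then 1 else 0) - α)
    (C := 1 + |α|) hS hhS ?_ (fun s => ?_) (h v)
  · exact (measurable_const.ite measurableSet_Iic measurable_const).sub measurable_const
  · refine (norm_sub_le _ _).trans (add_le_add ?_ le_rfl)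
    split_ifs <;> simp

theorem integrable_pinballExcess (hS : Measurable S) (hhS : Integrable (fun x => h (S x)) μ)
    (v q : ℝ) : Integrable (fun x => pinballExcess h v q (S x)) μ := by
  refine integrable_bdd_comp_mul_const_sub
    (g := fun s => (if s ≤ v then 1 else 0) - (if s ≤ q then 1 else 0)) (C := 1) hS hhS ?_
    (fun s => ?_) (h v)
  · exact (measurable_const.ite measurableSet_Iic measurable_const).sub
      (measurable_const.ite measurableSet_Iic measurable_const)
  · split_ifs <;> simp

theorem integral_pinballScore_sub (hS : Measurable S) (hhS : Integrable (fun x => h (S x)) μ)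
    (α v q : ℝ) :
    ∫ x, pinballScore h α v (S x) ∂μ - ∫ x, pinballScore h α q (S x) ∂μ
      = ∫ x, pinballExcess h v q (S x) ∂μ + (μ.real {x | S x ≤ q} - α) * (h v - h q) := by
  have hmeas : MeasurableSet {x | S x ≤ q} := measurableSet_le hS measurable_const
  have hindInt : Integrable (fun x => if S x ≤ q then (1 : ℝ) else 0) μ :=
    (integrable_const (1 : ℝ)).indicator hmeas
  have hind : ∫ x, (if S x ≤ q then (1 : ℝ) else 0) ∂μ = μ.real {x | S x ≤ q} :=
    integral_indicator_one hmeas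
  have hconstInt : Integrable (fun x => ((if S x ≤ q then (1 : ℝ) else 0) - α) * (h v - h q)) μ :=
    (hindInt.sub (integrable_const α)).mul_const _
  rw [← integral_sub (integrable_pinballScore hS hhS α v) (integrable_pinballScore hS hhS α q)]
  simp_rw [pinballScore_sub_pinballScore]
  rw [integral_add (integrable_pinballExcess hS hhS v q) hconstInt, integral_mul_const,
    integral_sub hindInt (integrable_const α), hind, integral_const, probReal_univ, one_smul]

theorem integral_pinballScore_lt (hS : Measurable S) (hhS : Integrable (fun x => h (S x)) μ)
    (hh : StrictMono h) {α : ℝ} (hq : μ.real {x | S x ≤ q} = α)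
    (hvq : 0 < μ (S ⁻¹' uIoo v q)) :
    ∫ x, pinballScore h α q (S x) ∂μ < ∫ x, pinballScore h α v (S x) ∂μ := by
  rw [← sub_pos, integral_pinballScore_sub hS hhS, hq, sub_self, zero_mul, add_zero,
    integral_pos_iff_support_of_nonneg (fun x => pinballExcess_nonneg hh.monotone)
      (integrable_pinballExcess hS hhS v q)]
  exact hvq.trans_le (measure_mono fun x hx => (pinballExcess_pos hh hx).ne')

end PinballLoss

theorem stmt8_general [IsProbabilityMeasure (ℙ : Measure Ω)]
    (S : Ω → ℝ) (hSmeas : Measurable S)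
    (F : ℝ → ℝ) (hF : ∀ x, F x = (ℙ {ω | S ω ≤ x}).toReal)
    (hcont : Continuous F)
    (hmono : StrictMonoOn F {x | F x ∈ Ioo 0 1})
    (α : ℝ) (hα : α ∈ Ioo (0:ℝ) 1)
    (h : ℝ → ℝ) (hh : StrictMono h)
    (hhint : Integrable (fun ω => h (S ω)) ℙ) :
    ∀ v : ℝ, v ≠ VaR α S →
      (∫ ω, ((if S ω ≤ VaR α S then (1:ℝ) else 0) - α) * (h (VaR α S) - h (S ω)))
        < ∫ ω, ((if S ω ≤ v then (1:ℝ) else 0) - α) * (h v - h (S ω)) := by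
  intro v hv
  set μ : Measure ℝ := (ℙ : Measure Ω).map S
  have : IsProbabilityMeasure μ := Measure.isProbabilityMeasure_map hSmeas.aemeasurable
  have hFcdf : F = cdf μ := funext fun x => by
    rw [hF, cdf_eq_real, map_measureReal_apply hSmeas measurableSet_Iic]
    rfl
  have hVaR_eq : VaR α S = sInf {x | α ≤ F x} := by simp only [VaR, hF]
  subst hFcdf
  have hVaR : cdf μ (VaR α S) = α := hVaR_eq ▸ cdf_sInf_eq_of_continuous hcont hα
  have hVaR_mem : cdf μ (VaR α S) ∈ Ioo 0 1 := by rw [hVaR]; exact hα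
  have hFv : cdf μ v ≠ cdf μ (VaR α S) := fun heq =>
    hv (hmono.injOn (show cdf μ v ∈ Ioo 0 1 by rw [heq]; exact hVaR_mem) hVaR_mem heq)
  have hpos : 0 < ℙ (S ⁻¹' uIoo v (VaR α S)) := by
    rw [← Measure.map_apply (s := uIoo v (VaR α S)) hSmeas measurableSet_Ioo]
    exact measure_uIoo_pos_of_cdf_ne hcont hFv
  exact integral_pinballScore_lt hSmeas hhint hh (by rw [measureReal_def, ← hF, hVaR]) hpos

/-- Strict consistency of the generalized pinball loss:
`v ↦ E[(1{S ≤ v} - α)(h(v) - h(S))]` is uniquely minimized at `v = VaR_α(S)`. -/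
theorem stmt8 [IsProbabilityMeasure (ℙ : Measure Ω)]
    (S : Ω → ℝ) (hSmeas : Measurable S) (hSint : Integrable S ℙ)
    (F : ℝ → ℝ) (hF : ∀ x, F x = (ℙ {ω | S ω ≤ x}).toReal)
    (hcont : Continuous F)
    (hmono : StrictMonoOn F {x | F x ∈ Ioo 0 1})
    (α : ℝ) (hα : α ∈ Ioo (0:ℝ) 1)
    (h : ℝ → ℝ) (hh : StrictMono h)
    (hhint : Integrable (fun ω => h (S ω)) ℙ) :
    ∀ v : ℝ, v ≠ VaR α S →
      (∫ ω, ((if S ω ≤ VaR α S then (1:ℝ) else 0) - α) * (h (VaR α S) - h (S ω)))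
        < ∫ ω, ((if S ω ≤ v then (1:ℝ) else 0) - α) * (h v - h (S ω)) :=
  stmt8_general S hSmeas F hF hcont hmono α hα h hh hhint
end

section
/- Joint identification: Under the assumptions that S = X_1+...+X_d has continuous strictly increasing CDF and X is integrable, the map (m_1,...,m_d,v) ↦ (E[α - 1{S ≤ v}], E[1{S>v}(X_1 - m_1)], ..., E[1{S>v}(X_d - m_d)]) vanishes at exactly one point, namely v = VaR_α(S) and m_j = ESC_α(X_j,S) for all j. -/
open MeasureTheory ProbabilityTheory Set

variable {Ω : Type*} [MeasureSpace Ω]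

/-!
Write `F` for the cdf of `S`, i.e. of the law `ℙ.map S`. Continuity of `F` and its limits at `±∞`
make `α` a value of `F`; strict monotonicity on `{0 < F < 1}` makes it attained exactly once, and
then `{x | α ≤ F x}` is a closed half-line starting at that point, which is therefore `VaR_α(S)`.
The first component of the identification function is `α - F v`, so it vanishes exactly at
`v = VaR_α(S)`. For this `v`, the `j`-th remaining component is
`E[X_j; S > v] - m_j P(S > v)` with `P(S > v) = 1 - α ≠ 0`, whose only zero is the ES contribution.
-/

namespace ProbabilityTheory

section Quantile

variable {ν : Measure ℝ} {α : ℝ}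

lemma setOf_le_cdf_eq_Ici (hmono : StrictMonoOn (cdf ν) {x | cdf ν x ∈ Ioo 0 1})
    (hα : α ∈ Ioo 0 1) {q : ℝ} (hq : cdf ν q = α) : {x | α ≤ cdf ν x} = Ici q := by
  ext x
  refine ⟨fun hx => ?_, fun hx => hq ▸ monotone_cdf ν hx⟩
  rw [mem_Ici]
  by_contra! hxq
  have hx_mem : cdf ν x ∈ Ioo 0 1 := le_antisymm (hq ▸ monotone_cdf ν hxq.le) hx ▸ hα
  exact (hmono hx_mem (show cdf ν q ∈ Ioo 0 1 from hq ▸ hα) hxq).not_ge (hq ▸ hx)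

lemma cdf_eq_iff_eq_sInf [IsProbabilityMeasure ν] (hcont : Continuous (cdf ν))
    (hmono : StrictMonoOn (cdf ν) {x | cdf ν x ∈ Ioo 0 1}) (hα : α ∈ Ioo 0 1) (v : ℝ) :
    cdf ν v = α ↔ v = sInf {x | α ≤ cdf ν x} := by
  obtain ⟨q, hq⟩ : α ∈ range (cdf ν) :=
    mem_range_of_exists_le_of_exists_ge hcont
      ((tendsto_cdf_atBot ν).eventually_le_const hα.1).exists
      ((tendsto_cdf_atTop ν).eventually_const_le hα.2).exists
  rw [setOf_le_cdf_eq_Ici hmono hα hq, csInf_Ici]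
  exact ⟨fun hv => hmono.injOn (show cdf ν v ∈ Ioo 0 1 from hv ▸ hα)
    (show cdf ν q ∈ Ioo 0 1 from hq ▸ hα) (hv.trans hq.symm), fun hv => hv ▸ hq⟩

end Quantile

section Integrals

variable {μ : Measure Ω} [IsProbabilityMeasure μ] {S : Ω → ℝ}

lemma cdf_map_eq_toReal_measure (hS : AEMeasurable S μ) (x : ℝ) :
    cdf (μ.map S) x = (μ {ω | S ω ≤ x}).toReal := by
  have : IsProbabilityMeasure (μ.map S) := Measure.isProbabilityMeasure_map hS
  rw [cdf_eq_real, measureReal_def, Measure.map_apply_of_aemeasurable hS measurableSet_Iic]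
  rfl

lemma toReal_measure_lt_eq_one_sub_cdf_map (hS : AEMeasurable S μ) (x : ℝ) :
    (μ {ω | x < S ω}).toReal = 1 - cdf (μ.map S) x := by
  have : IsProbabilityMeasure (μ.map S) := Measure.isProbabilityMeasure_map hS
  rw [cdf_eq_real, ← probReal_compl_eq_one_sub measurableSet_Iic, compl_Iic, measureReal_def,
    Measure.map_apply_of_aemeasurable hS measurableSet_Ioi]
  rfl

lemma integral_sub_ite_le_eq_sub_cdf_map (hS : AEMeasurable S μ) (α v : ℝ) :
    ∫ ω, (α - if S ω ≤ v then (1 : ℝ) else 0) ∂μ = α - cdf (μ.map S) v := by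
  have hmeas : NullMeasurableSet {ω | S ω ≤ v} μ := hS.nullMeasurable measurableSet_Iic
  have hind : (fun ω => α - if S ω ≤ v then (1 : ℝ) else 0)
      = fun ω => α - {ω | S ω ≤ v}.indicator (fun _ => (1 : ℝ)) ω := by
    ext ω; simp [indicator_apply]
  rw [hind, integral_sub (integrable_const α) ((integrable_const 1).indicator₀ hmeas),
    integral_indicator₀ hmeas, integral_const, setIntegral_const, cdf_map_eq_toReal_measure hS]
  simp [measureReal_def]

lemma integral_ite_lt_sub_const_eq (hS : AEMeasurable S μ) {Y : Ω → ℝ} (hY : Integrable Y μ)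
    (v c : ℝ) :
    ∫ ω, (if v < S ω then Y ω - c else 0) ∂μ
      = ∫ ω in {ω | v < S ω}, Y ω ∂μ - c * (μ {ω | v < S ω}).toReal := by
  have hind : (fun ω => if v < S ω then Y ω - c else 0)
      = {ω | v < S ω}.indicator (fun ω => Y ω - c) := by
    ext ω; simp [indicator_apply]
  rw [hind, integral_indicator₀ (s := {ω | v < S ω}) (hS.nullMeasurable measurableSet_Ioi),
    integral_sub hY.restrict (integrable_const c), setIntegral_const, smul_eq_mul,
    measureReal_def, mul_comm]

end Integrals

end ProbabilityTheory

lemma VaR_eq_sInf_cdf_map [IsProbabilityMeasure (ℙ : Measure Ω)] {S : Ω → ℝ}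
    (hS : AEMeasurable S) (α : ℝ) : VaR α S = sInf {x | α ≤ cdf ((ℙ : Measure Ω).map S) x} := by
  simp only [VaR, cdf_map_eq_toReal_measure hS]

theorem stmt11_general [IsProbabilityMeasure (ℙ : Measure Ω)]
    (d : ℕ) (X : Fin d → Ω → ℝ)
    (hXint : ∀ i, Integrable (X i) ℙ)
    (S : Ω → ℝ) (hS : ∀ ω, S ω = ∑ i, X i ω)
    (F : ℝ → ℝ) (hF : ∀ x, F x = (ℙ {ω | S ω ≤ x}).toReal)
    (hcont : Continuous F)
    (hmono : StrictMonoOn F {x | F x ∈ Ioo 0 1})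
    (α : ℝ) (hα : α ∈ Ioo (0:ℝ) 1) :
    ∀ (m : Fin d → ℝ) (v : ℝ),
      ((∫ ω, (α - if S ω ≤ v then (1:ℝ) else 0)) = 0
          ∧ ∀ j, (∫ ω, if v < S ω then X j ω - m j else 0) = 0)
      ↔ (v = VaR α S
          ∧ ∀ j, m j = (∫ ω in {ω | VaR α S < S ω}, X j ω)
              / (ℙ {ω | VaR α S < S ω}).toReal) := by
  intro m v
  have hSm : AEMeasurable S := by
    rw [funext hS]; exact Finset.aemeasurable_fun_sum _ fun i _ => (hXint i).aemeasurable
  obtain rfl : F = cdf ((ℙ : Measure Ω).map S) :=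
    funext fun x => (hF x).trans (cdf_map_eq_toReal_measure hSm x).symm
  have := Measure.isProbabilityMeasure_map hSm
  have hVaR : cdf ((ℙ : Measure Ω).map S) v = α ↔ v = VaR α S := by
    rw [VaR_eq_sInf_cdf_map hSm]
    exact cdf_eq_iff_eq_sInf hcont hmono hα v
  rw [integral_sub_ite_le_eq_sub_cdf_map hSm, sub_eq_zero, eq_comm, hVaR]
  refine and_congr_right fun hv => ?_
  subst hv
  have htail : (ℙ {ω | VaR α S < S ω}).toReal ≠ 0 := by
    rw [toReal_measure_lt_eq_one_sub_cdf_map hSm, hVaR.2 rfl]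
    exact sub_ne_zero.2 hα.2.ne'
  simp_rw [integral_ite_lt_sub_const_eq hSm (hXint _), sub_eq_zero, eq_div_iff htail, eq_comm]

/-- Joint identification of the tuple of ES contributions together with total VaR:
the joint identification function vanishes exactly at
`v = VaR_α(S)` and `m_j = ESC_α(X_j,S)` for all `j`. -/
theorem stmt11 [IsProbabilityMeasure (ℙ : Measure Ω)]
    (d : ℕ) (X : Fin d → Ω → ℝ)
    (hXmeas : ∀ i, Measurable (X i)) (hXint : ∀ i, Integrable (X i) ℙ)
    (S : Ω → ℝ) (hS : ∀ ω, S ω = ∑ i, X i ω)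
    (F : ℝ → ℝ) (hF : ∀ x, F x = (ℙ {ω | S ω ≤ x}).toReal)
    (hcont : Continuous F)
    (hmono : StrictMonoOn F {x | F x ∈ Ioo 0 1})
    (α : ℝ) (hα : α ∈ Ioo (0:ℝ) 1) :
    ∀ (m : Fin d → ℝ) (v : ℝ),
      ((∫ ω, (α - if S ω ≤ v then (1:ℝ) else 0)) = 0
          ∧ ∀ j, (∫ ω, if v < S ω then X j ω - m j else 0) = 0)
      ↔ (v = VaR α S
          ∧ ∀ j, m j = (∫ ω in {ω | VaR α S < S ω}, X j ω)
              / (ℙ {ω | VaR α S < S ω}).toReal) :=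
  stmt11_general d X hXint S hS F hF hcont hmono α hα
end

section
/- Lexicographic ordering of expected scores under ordered VaR misspecification: Let S be integrable with continuous strictly increasing CDF and h strictly increasing with E|h(S)| < ∞. If v* < v ≤ VaR_α(S) or VaR_α(S) ≤ v < v*, then E[(1{S≤v}-α)(h(v)-h(S))] < E[(1{S≤v*}-α)(h(v*)-h(S))]; consequently for any m, m* ∈ ℝ, E[S_j((m,v),X)] ≤_lex E[S_j((m*,v*),X)] for the multi-objective ESC score S_j. -/
/-!
For `a ≤ c ≤ b`, the increment `S^VaR(b, s) - S^VaR(a, s)` is squeezed between combinations of the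
indicators `1{s ≤ a}`, `1{s ≤ c}`, `1{s ≤ b}` with coefficients built from `h a ≤ h c ≤ h b`, so in
expectation it is controlled by the CDF `F` of `S` at these three points. Continuity of `F` gives
`F (VaR_α S) = α`, hence `F ≤ α` left of the VaR and `F ≥ α` right of it; taking `c` the midpoint,
strict monotonicity of `h`, and of `F` where `0 < F < 1`, makes the bounds strict. The lexicographic
comparison is then decided by the first coordinate.
-/

open MeasureTheory ProbabilityTheory Set

variable {Ω : Type*} [MeasureSpace Ω]

open Filter Topology

theorem Monotone.lt_of_strictMonoOn_setOf_mem {F : ℝ → ℝ} {T : Set ℝ} (hF : Monotone F)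
    (hT : StrictMonoOn F {x | F x ∈ T}) {x y : ℝ} (hxy : x < y) (hx : F x ∈ T ∨ F y ∈ T) :
    F x < F y := by
  refine (hF hxy.le).lt_of_ne fun heq => ?_
  have hxT : F x ∈ T := hx.elim id fun hy => heq ▸ hy
  exact (hT hxT (show F y ∈ T from heq ▸ hxT) hxy).ne heq

theorem Continuous.apply_sInf_setOf_le_eq {F : ℝ → ℝ} (hcont : Continuous F) (hF : Monotone F)
    (hbot : Tendsto F atBot (𝓝 0)) (htop : Tendsto F atTop (𝓝 1)) {α : ℝ} (hα : α ∈ Ioo 0 1) :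
    F (sInf {x | α ≤ F x}) = α := by
  set A := {x | α ≤ F x}
  obtain ⟨x₀, hx₀⟩ := (hbot.eventually (eventually_lt_nhds hα.1)).exists
  obtain ⟨x₁, hx₁⟩ := (htop.eventually (eventually_ge_nhds hα.2)).exists
  have hbdd : BddBelow A :=
    ⟨x₀, fun x hx => le_of_not_gt fun hlt => (hx.trans (hF hlt.le)).not_gt hx₀⟩
  refine le_antisymm ?_ ((isClosed_le continuous_const hcont).csInf_mem ⟨x₁, hx₁⟩ hbdd)
  have hbelow : ∀ᶠ x in 𝓝[<] sInf A, F x ≤ α :=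
    eventually_nhdsWithin_of_forall fun x hx =>
      le_of_not_ge fun hle => (csInf_le hbdd hle).not_gt hx
  exact le_of_tendsto hcont.continuousWithinAt.tendsto hbelow

/-- The paper's `S^VaR(v, s)`. -/
noncomputable def varScore (α : ℝ) (h : ℝ → ℝ) (v s : ℝ) : ℝ :=
  ((if s ≤ v then 1 else 0) - α) * (h v - h s)

section Pointwise

variable {α : ℝ} {h : ℝ → ℝ} {a b c : ℝ}

theorem varScore_sub_varScore_le (hh : Monotone h) (hac : a ≤ c) (hcb : c ≤ b) (s : ℝ) :
    varScore α h b s - varScore α h a s ≤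
      ((if s ≤ b then 1 else 0) - α) * (h b - h a)
        - ((if s ≤ b then 1 else 0) - (if s ≤ c then 1 else 0)) * (h c - h a) := by
  have hsa : a < s → h a ≤ h s := fun hs => hh hs.le
  have hsc : c < s → h c ≤ h s := fun hs => hh hs.le
  unfold varScore
  split_ifs <;> grind

theorem le_varScore_sub_varScore (hh : Monotone h) (hac : a ≤ c) (hcb : c ≤ b) (s : ℝ) :
    ((if s ≤ a then 1 else 0) - α) * (h b - h a)
        + ((if s ≤ c then 1 else 0) - (if s ≤ a then 1 else 0)) * (h b - h c) ≤
      varScore α h b s - varScore α h a s := by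
  have hsc : s ≤ c → h s ≤ h c := fun hs => hh hs
  have hsb : s ≤ b → h s ≤ h b := fun hs => hh hs
  unfold varScore
  split_ifs <;> grind

end Pointwise

section Expectation

variable {Ω : Type*} [MeasurableSpace Ω] {μ : Measure Ω} [IsProbabilityMeasure μ] {S : Ω → ℝ}
  {α : ℝ} {h : ℝ → ℝ} {a b : ℝ}

theorem cdf_map_apply (hS : Measurable S) (x : ℝ) : cdf (μ.map S) x = μ.real {ω | S ω ≤ x} := by
  have := Measure.isProbabilityMeasure_map (μ := μ) hS.aemeasurable
  rw [cdf_eq_real, map_measureReal_apply hS measurableSet_Iic]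
  rfl

theorem measurable_ite_le (hS : Measurable S) (x : ℝ) :
    Measurable fun ω => if S ω ≤ x then (1 : ℝ) else 0 :=
  Measurable.ite (hS measurableSet_Iic) measurable_const measurable_const

theorem integral_ite_le (hS : Measurable S) (x : ℝ) :
    ∫ ω, (if S ω ≤ x then (1 : ℝ) else 0) ∂μ = cdf (μ.map S) x := by
  rw [cdf_map_apply hS, ← integral_indicator_one (s := {ω | S ω ≤ x}) (hS measurableSet_Iic)]
  simp only [indicator_apply, mem_ofPred_eq, Pi.one_apply]

theorem integrable_ite_le (hS : Measurable S) (x : ℝ) :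
    Integrable (fun ω => if S ω ≤ x then (1 : ℝ) else 0) μ :=
  (integrable_const 1).mono' (measurable_ite_le hS x).aestronglyMeasurable
    (ae_of_all _ fun ω => by split_ifs <;> simp)

theorem integrable_varScore (hS : Measurable S) (hhS : Integrable (fun ω => h (S ω)) μ) (v : ℝ) :
    Integrable (fun ω => varScore α h v (S ω)) μ :=
  ((integrable_const (h v)).sub hhS).bdd_mul (c := 1 + |α|)
    ((measurable_ite_le hS v).sub_const α).aestronglyMeasurable <| ae_of_all _ fun ω =>
    (norm_sub_le _ _).trans (by split_ifs <;> simp)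

theorem integral_varScore_sub_le (hS : Measurable S) (hh : Monotone h)
    (hhS : Integrable (fun ω => h (S ω)) μ) {c : ℝ} (hac : a ≤ c) (hcb : c ≤ b) :
    ∫ ω, varScore α h b (S ω) ∂μ - ∫ ω, varScore α h a (S ω) ∂μ ≤
      (cdf (μ.map S) b - α) * (h b - h a) - (cdf (μ.map S) b - cdf (μ.map S) c) * (h c - h a) := by
  have hb := integrable_ite_le (μ := μ) hS b
  have hc := integrable_ite_le (μ := μ) hS c
  have hbα : Integrable (fun ω => ((if S ω ≤ b then 1 else 0) - α) * (h b - h a)) μ :=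
    (hb.sub (integrable_const α)).mul_const _
  have hbc : Integrable (fun ω =>
      ((if S ω ≤ b then 1 else 0) - (if S ω ≤ c then 1 else 0)) * (h c - h a)) μ :=
    (hb.sub hc).mul_const _
  rw [← integral_sub (integrable_varScore hS hhS b) (integrable_varScore hS hhS a)]
  refine (integral_mono ((integrable_varScore hS hhS b).sub (integrable_varScore hS hhS a))
    (hbα.sub hbc) fun ω => varScore_sub_varScore_le hh hac hcb (S ω)).trans_eq ?_
  simp only [Pi.sub_apply]
  rw [integral_sub hbα hbc, integral_mul_const, integral_mul_const,
    integral_sub hb (integrable_const α), integral_sub hb hc, integral_ite_le hS,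
    integral_ite_le hS, integral_const]
  simp

theorem le_integral_varScore_sub (hS : Measurable S) (hh : Monotone h)
    (hhS : Integrable (fun ω => h (S ω)) μ) {c : ℝ} (hac : a ≤ c) (hcb : c ≤ b) :
    (cdf (μ.map S) a - α) * (h b - h a) + (cdf (μ.map S) c - cdf (μ.map S) a) * (h b - h c) ≤
      ∫ ω, varScore α h b (S ω) ∂μ - ∫ ω, varScore α h a (S ω) ∂μ := by
  have ha := integrable_ite_le (μ := μ) hS a
  have hc := integrable_ite_le (μ := μ) hS c
  have haα : Integrable (fun ω => ((if S ω ≤ a then 1 else 0) - α) * (h b - h a)) μ :=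
    (ha.sub (integrable_const α)).mul_const _
  have hca : Integrable (fun ω =>
      ((if S ω ≤ c then 1 else 0) - (if S ω ≤ a then 1 else 0)) * (h b - h c)) μ :=
    (hc.sub ha).mul_const _
  rw [← integral_sub (integrable_varScore hS hhS b) (integrable_varScore hS hhS a)]
  refine le_of_eq_of_le ?_ (integral_mono (haα.add hca)
    ((integrable_varScore hS hhS b).sub (integrable_varScore hS hhS a))
    fun ω => le_varScore_sub_varScore hh hac hcb (S ω))
  simp only [Pi.add_apply]
  rw [integral_add haα hca, integral_mul_const, integral_mul_const,
    integral_sub ha (integrable_const α), integral_sub hc ha, integral_ite_le hS,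
    integral_ite_le hS, integral_const]
  simp

theorem integral_varScore_lt_of_cdf_le (hS : Measurable S) (hh : StrictMono h)
    (hhS : Integrable (fun ω => h (S ω)) μ)
    (hmono : StrictMonoOn (cdf (μ.map S)) {x | cdf (μ.map S) x ∈ Ioo 0 1}) (hα : α ∈ Ioo 0 1)
    (hab : a < b) (hFb : cdf (μ.map S) b ≤ α) :
    ∫ ω, varScore α h b (S ω) ∂μ < ∫ ω, varScore α h a (S ω) ∂μ := by
  set F := cdf (μ.map S)
  set c := (a + b) / 2
  have hac : a < c := by simp only [c]; linarith
  have hcb : c < b := by simp only [c]; linarith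
  have hbound := integral_varScore_sub_le hS hh.monotone hhS (α := α) hac.le hcb.le
  have hFcb : F c ≤ F b := F.mono hcb.le
  have hhac := hh hac
  have hhcb := hh hcb
  rcases hFb.lt_or_eq with hFb | hFb
  · nlinarith
  · have hFcb : F c < F b := F.mono.lt_of_strictMonoOn_setOf_mem hmono hcb (.inr (hFb ▸ hα))
    nlinarith

theorem integral_varScore_lt_of_le_cdf (hS : Measurable S) (hh : StrictMono h)
    (hhS : Integrable (fun ω => h (S ω)) μ)
    (hmono : StrictMonoOn (cdf (μ.map S)) {x | cdf (μ.map S) x ∈ Ioo 0 1}) (hα : α ∈ Ioo 0 1)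
    (hab : a < b) (hFa : α ≤ cdf (μ.map S) a) :
    ∫ ω, varScore α h a (S ω) ∂μ < ∫ ω, varScore α h b (S ω) ∂μ := by
  set F := cdf (μ.map S)
  set c := (a + b) / 2
  have hac : a < c := by simp only [c]; linarith
  have hcb : c < b := by simp only [c]; linarith
  have hbound := le_integral_varScore_sub hS hh.monotone hhS (α := α) hac.le hcb.le
  have hFac : F a ≤ F c := F.mono hac.le
  have hhab := hh hab
  have hhcb := hh hcb
  rcases hFa.lt_or_eq with hFa | hFa
  · nlinarith
  · have hFac : F a < F c := F.mono.lt_of_strictMonoOn_setOf_mem hmono hac (.inl (hFa ▸ hα))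
    nlinarith

end Expectation

theorem stmt16_general [IsProbabilityMeasure (ℙ : Measure Ω)]
    (d : ℕ) (X : Fin d → Ω → ℝ)
    (hXmeas : ∀ i, Measurable (X i))
    (S : Ω → ℝ) (hS : ∀ ω, S ω = ∑ i, X i ω)
    (F : ℝ → ℝ) (hF : ∀ x, F x = (ℙ {ω | S ω ≤ x}).toReal)
    (hcont : Continuous F)
    (hmono : StrictMonoOn F {x | F x ∈ Ioo 0 1})
    (α : ℝ) (hα : α ∈ Ioo (0:ℝ) 1)
    (h : ℝ → ℝ) (hh : StrictMono h)
    (hhint : Integrable (fun ω => h (S ω)) ℙ)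
    (j : Fin d) (φ φ' : ℝ → ℝ)
    (v vstar : ℝ)
    (hcase : (vstar < v ∧ v ≤ VaR α S) ∨ (VaR α S ≤ v ∧ v < vstar)) :
    (∫ ω, ((if S ω ≤ v then (1:ℝ) else 0) - α) * (h v - h (S ω)))
      < (∫ ω, ((if S ω ≤ vstar then (1:ℝ) else 0) - α) * (h vstar - h (S ω)))
    ∧ ∀ m mstar : ℝ,
      (toLex (
          (∫ ω, ((if S ω ≤ v then (1:ℝ) else 0) - α) * (h v - h (S ω))),
          (∫ ω, if v < S ω then φ' m * (m - X j ω) - φ m + φ (X j ω) else 0)) : ℝ ×ₗ ℝ)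
        ≤ toLex (
          (∫ ω, ((if S ω ≤ vstar then (1:ℝ) else 0) - α) * (h vstar - h (S ω))),
          (∫ ω, if vstar < S ω then
            φ' mstar * (mstar - X j ω) - φ mstar + φ (X j ω) else 0)) := by
  have hSm : Measurable S := by
    rw [show S = fun ω => ∑ i, X i ω from funext hS]
    exact Finset.measurable_sum _ fun i _ => hXmeas i
  obtain rfl : F = cdf (Measure.map S ℙ) :=
    funext fun x => by rw [hF, cdf_map_apply hSm, measureReal_def]
  have hVaR : cdf (Measure.map S ℙ) (VaR α S) = α := by
    have hset : VaR α S = sInf {x | α ≤ cdf (Measure.map S ℙ) x} := by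
      simp only [VaR, cdf_map_apply hSm, measureReal_def]
    rw [hset]
    exact hcont.apply_sInf_setOf_le_eq (cdf _).mono (tendsto_cdf_atBot _) (tendsto_cdf_atTop _) hα
  have hlt : ∫ ω, varScore α h v (S ω) < ∫ ω, varScore α h vstar (S ω) := by
    rcases hcase with ⟨hlt, hle⟩ | ⟨hle, hlt⟩
    · exact integral_varScore_lt_of_cdf_le hSm hh hhint hmono hα hlt (hVaR ▸ (cdf _).mono hle)
    · exact integral_varScore_lt_of_le_cdf hSm hh hhint hmono hα hlt (hVaR ▸ (cdf _).mono hle)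
  exact ⟨hlt, fun _ _ => Prod.Lex.toLex_le_toLex.mpr (.inl hlt)⟩

/-- Lexicographic ordering of expected multi-objective ESC scores under ordered
misspecification of the total VaR. -/
theorem stmt16 [IsProbabilityMeasure (ℙ : Measure Ω)]
    (d : ℕ) (X : Fin d → Ω → ℝ)
    (hXmeas : ∀ i, Measurable (X i)) (hXint : ∀ i, Integrable (X i) ℙ)
    (S : Ω → ℝ) (hS : ∀ ω, S ω = ∑ i, X i ω)
    (F : ℝ → ℝ) (hF : ∀ x, F x = (ℙ {ω | S ω ≤ x}).toReal)
    (hcont : Continuous F)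
    (hmono : StrictMonoOn F {x | F x ∈ Ioo 0 1})
    (α : ℝ) (hα : α ∈ Ioo (0:ℝ) 1)
    (h : ℝ → ℝ) (hh : StrictMono h)
    (hhint : Integrable (fun ω => h (S ω)) ℙ)
    (j : Fin d) (φ φ' : ℝ → ℝ)
    (hconv : StrictConvexOn ℝ Set.univ φ)
    (hderiv : ∀ y, HasDerivAt φ (φ' y) y)
    (hintESC : ∀ m v : ℝ, Integrable
      (fun ω => if v < S ω then φ' m * (m - X j ω) - φ m + φ (X j ω) else 0) ℙ)
    (v vstar : ℝ)
    (hcase : (vstar < v ∧ v ≤ VaR α S) ∨ (VaR α S ≤ v ∧ v < vstar)) :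
    (∫ ω, ((if S ω ≤ v then (1:ℝ) else 0) - α) * (h v - h (S ω)))
      < (∫ ω, ((if S ω ≤ vstar then (1:ℝ) else 0) - α) * (h vstar - h (S ω)))
    ∧ ∀ m mstar : ℝ,
      (toLex (
          (∫ ω, ((if S ω ≤ v then (1:ℝ) else 0) - α) * (h v - h (S ω))),
          (∫ ω, if v < S ω then φ' m * (m - X j ω) - φ m + φ (X j ω) else 0)) : ℝ ×ₗ ℝ)
        ≤ toLex (
          (∫ ω, ((if S ω ≤ vstar then (1:ℝ) else 0) - α) * (h vstar - h (S ω))),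
          (∫ ω, if vstar < S ω then
            φ' mstar * (mstar - X j ω) - φ mstar + φ (X j ω) else 0)) :=
  stmt16_general d X hXmeas S hS F hF hcont hmono α hα h hh hhint j φ φ' v vstar hcase
end

section
/- Elliptical allocation formula for the multivariate normal case: If X ~ N(μ, Σ) in ℝ^d with Σ positive definite, S = 𝟙ᵀX, and α ∈ (0,1), then ESC_α(X_j, S) = E[X_j | S ≥ VaR_α(S)] = μ_j + ((Σ𝟙)_j / (𝟙ᵀΣ𝟙)) · (ES_α(S) - 𝟙ᵀμ). -/
/-!
Put `β = Cov(X_j, S) / Var S`. The residual `X_j - β S` is uncorrelated with `S`, and the pair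
`(X_j - β S, S)` is a linear image of a Gaussian vector, hence Gaussian; so the residual is
independent of `S`, and its integral over `{S ≥ c}` is `P(S ≥ c)` times its mean
`μ_j - β 𝟙ᵀμ`. The moments come from the laws of the projections:
`Cov(X_j, S) = (Σ𝟙)_j` and `Var S = 𝟙ᵀΣ𝟙 > 0` by polarization of `t ↦ tᵀΣt`, and the latter
makes `P(S ≥ c)` positive.
-/

open MeasureTheory ProbabilityTheory Set Matrix

variable {Ω : Type*} [MeasureSpace Ω]

lemma Matrix.sum_sum_mul_mul_eq_dotProduct_mulVec {ι : Type*} [Fintype ι] (A : Matrix ι ι ℝ)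
    (a b : ι → ℝ) : ∑ i, ∑ k, a i * A i k * b k = a ⬝ᵥ (A *ᵥ b) := by
  simp only [dotProduct, mulVec, Finset.mul_sum, mul_assoc]

namespace ProbabilityTheory

variable {P : Measure Ω}

lemma hasGaussianLaw_prodMk_of_forall_linear {Y W : Ω → ℝ} (hY : AEMeasurable Y P)
    (hW : AEMeasurable W P) (h : ∀ a b : ℝ, HasGaussianLaw (fun ω ↦ a * Y ω + b * W ω) P) :
    HasGaussianLaw (fun ω ↦ (Y ω, W ω)) P := by
  refine ⟨isGaussian_of_isGaussian_map fun L ↦ ?_⟩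
  have hL : ∀ ω, L (Y ω, W ω) = L (1, 0) * Y ω + L (0, 1) * W ω := fun ω ↦ by
    rw [mul_comm, mul_comm (L (0, 1)), ← smul_eq_mul, ← smul_eq_mul, ← L.map_smul, ← L.map_smul,
      ← L.map_add]
    simp
  rw [AEMeasurable.map_map_of_aemeasurable (by fun_prop) (by fun_prop), Function.comp_def]
  simp_rw [hL]
  exact (h _ _).isGaussian_map

lemma measure_Ici_pos_gaussianReal (m : ℝ) {v : NNReal} (hv : v ≠ 0) (c : ℝ) :
    0 < gaussianReal m v (Ici c) :=
  haveI := (gaussianReal_absolutelyContinuous' m hv).isOpenPosMeasure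
  (Measure.measure_Ioi_pos _ c).trans_le (measure_mono Ioi_subset_Ici_self)

lemma HasLaw.measure_preimage_Ici_pos {S : Ω → ℝ} {m : ℝ} {v : NNReal}
    (hS : HasLaw S (gaussianReal m v) P) (hv : v ≠ 0) (c : ℝ) : 0 < P (S ⁻¹' Ici c) :=
  (hS.measure_eq (p := (c ≤ ·)) measurableSet_Ici) ▸ measure_Ici_pos_gaussianReal m hv c

lemma IndepFun.setIntegral_preimage_eq [IsProbabilityMeasure P] {Z S : Ω → ℝ}
    (hZS : IndepFun Z S P) (hZ : AEStronglyMeasurable Z P) (hS : Measurable S) {B : Set ℝ}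
    (hB : MeasurableSet B) :
    ∫ ω in S ⁻¹' B, Z ω ∂P = P.real (S ⁻¹' B) * P[Z] := by
  have hind : IndepFun (B.indicator (1 : ℝ → ℝ) ∘ S) Z P :=
    hZS.symm.comp (measurable_one.indicator hB) measurable_id
  have hcomp : B.indicator (1 : ℝ → ℝ) ∘ S = (S ⁻¹' B).indicator 1 := by
    ext ω
    by_cases hω : S ω ∈ B <;> simp [hω]
  rw [← integral_indicator_one (hS hB), ← hcomp, ← hind.integral_mul_eq_mul_integral
    ((measurable_one.indicator hB).comp hS).aestronglyMeasurable hZ, hcomp,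
    ← integral_indicator (hS hB)]
  congr 1
  ext ω
  by_cases hω : S ω ∈ B <;> simp [hω]

lemma HasGaussianLaw.setIntegral_preimage_eq {Y S : Ω → ℝ}
    (hYS : HasGaussianLaw (fun ω ↦ (Y ω, S ω)) P) (hS : Measurable S) (hvar : Var[S; P] ≠ 0)
    {B : Set ℝ} (hB : MeasurableSet B) :
    ∫ ω in S ⁻¹' B, Y ω ∂P = P.real (S ⁻¹' B) * P[Y]
      + cov[Y, S; P] / Var[S; P] * (∫ ω in S ⁻¹' B, S ω ∂P - P.real (S ⁻¹' B) * P[S]) := by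
  have := hYS.isProbabilityMeasure
  set β := cov[Y, S; P] / Var[S; P]
  have hY := hYS.fst.integrable
  have hS1 := hYS.snd.integrable
  have hZS : HasGaussianLaw (fun ω ↦ (Y ω - β * S ω, S ω)) P := by
    simpa using hYS.map_fun
      ((ContinuousLinearMap.fst ℝ ℝ ℝ - β • ContinuousLinearMap.snd ℝ ℝ ℝ).prod
        (ContinuousLinearMap.snd ℝ ℝ ℝ))
  have hcov : cov[fun ω ↦ Y ω - β * S ω, S; P] = 0 := by
    have hS2 := hYS.snd.memLp_two
    rw [covariance_fun_sub_left hYS.fst.memLp_two (hS2.const_mul β) hS2,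
      covariance_const_mul_left, covariance_self hS2.aemeasurable]
    exact sub_eq_zero.2 (div_mul_cancel₀ _ hvar).symm
  have hresidual := (hZS.indepFun_of_covariance_eq_zero hcov).setIntegral_preimage_eq
    hZS.fst.aemeasurable.aestronglyMeasurable hS hB
  rw [integral_sub hY (hS1.const_mul β), integral_const_mul,
    integral_sub hY.integrableOn (hS1.integrableOn.const_mul β),
    integral_const_mul] at hresidual
  linear_combination hresidual

variable {ι : Type*} [Fintype ι]

/-- `X ~ N(m, Sig)`, expressed through the laws of its one-dimensional projections. -/
def HasMultivariateNormalLaw (X : ι → Ω → ℝ) (m : ι → ℝ) (Sig : Matrix ι ι ℝ)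
    (P : Measure Ω) : Prop :=
  ∀ t : ι → ℝ, P.map (fun ω ↦ ∑ i, t i * X i ω)
    = gaussianReal (∑ i, t i * m i) (∑ i, ∑ k, t i * Sig i k * t k).toNNReal

namespace HasMultivariateNormalLaw

variable {X : ι → Ω → ℝ} {m : ι → ℝ} {Sig : Matrix ι ι ℝ}

lemma hasLaw_sum_mul (hXP : HasMultivariateNormalLaw X m Sig P) (hX : ∀ i, Measurable (X i))
    (t : ι → ℝ) :
    HasLaw (fun ω ↦ ∑ i, t i * X i ω) (gaussianReal (t ⬝ᵥ m) (t ⬝ᵥ (Sig *ᵥ t)).toNNReal) P where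
  aemeasurable := by fun_prop
  map_eq := by rw [hXP, sum_sum_mul_mul_eq_dotProduct_mulVec]; rfl

lemma integral_sum_mul (hXP : HasMultivariateNormalLaw X m Sig P) (hX : ∀ i, Measurable (X i))
    (t : ι → ℝ) : P[fun ω ↦ ∑ i, t i * X i ω] = t ⬝ᵥ m := by
  rw [(hXP.hasLaw_sum_mul hX t).integral_eq, integral_id_gaussianReal]

lemma variance_sum_mul (hXP : HasMultivariateNormalLaw X m Sig P) (hX : ∀ i, Measurable (X i))
    (hSig : Sig.PosSemidef) (t : ι → ℝ) :
    Var[fun ω ↦ ∑ i, t i * X i ω; P] = t ⬝ᵥ (Sig *ᵥ t) := by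
  rw [(hXP.hasLaw_sum_mul hX t).variance_eq, variance_id_gaussianReal,
    Real.coe_toNNReal _ (by simpa using hSig.dotProduct_mulVec_nonneg t)]

lemma hasGaussianLaw_prodMk_sum_mul (hXP : HasMultivariateNormalLaw X m Sig P)
    (hX : ∀ i, Measurable (X i)) (a b : ι → ℝ) :
    HasGaussianLaw (fun ω ↦ (∑ i, a i * X i ω, ∑ i, b i * X i ω)) P := by
  refine hasGaussianLaw_prodMk_of_forall_linear (by fun_prop) (by fun_prop) fun c d ↦ ?_
  convert (hXP.hasLaw_sum_mul hX (c • a + d • b)).hasGaussianLaw using 2 with ω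
  simp only [Pi.add_apply, Pi.smul_apply, smul_eq_mul, add_mul, Finset.sum_add_distrib,
    Finset.mul_sum, mul_assoc]

lemma covariance_sum_mul (hXP : HasMultivariateNormalLaw X m Sig P) (hX : ∀ i, Measurable (X i))
    (hSig : Sig.PosSemidef) (a b : ι → ℝ) :
    cov[fun ω ↦ ∑ i, a i * X i ω, fun ω ↦ ∑ i, b i * X i ω; P] = a ⬝ᵥ (Sig *ᵥ b) := by
  have hab := hXP.hasGaussianLaw_prodMk_sum_mul hX a b
  have := hab.isProbabilityMeasure
  have hvar := variance_fun_add hab.fst.memLp_two hab.snd.memLp_two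
  have hsum : (fun ω ↦ ∑ i, a i * X i ω + ∑ i, b i * X i ω)
      = fun ω ↦ ∑ i, (a + b) i * X i ω := by
    ext ω
    simp only [Pi.add_apply, add_mul, Finset.sum_add_distrib]
  have hsymm : b ⬝ᵥ (Sig *ᵥ a) = a ⬝ᵥ (Sig *ᵥ b) := by
    rw [dotProduct_mulVec, ← mulVec_transpose, (isHermitian_iff_isSymm.1 hSig.isHermitian).eq,
      dotProduct_comm]
  rw [hsum] at hvar
  simp only [hXP.variance_sum_mul hX hSig, mulVec_add, add_dotProduct, dotProduct_add,
    hsymm] at hvar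
  linarith

lemma setIntegral_preimage_eq (hXP : HasMultivariateNormalLaw X m Sig P)
    (hX : ∀ i, Measurable (X i)) (hSig : Sig.PosSemidef) (a b : ι → ℝ)
    (hb : b ⬝ᵥ (Sig *ᵥ b) ≠ 0) {B : Set ℝ} (hB : MeasurableSet B) :
    let S := fun ω ↦ ∑ i, b i * X i ω
    ∫ ω in S ⁻¹' B, ∑ i, a i * X i ω ∂P = P.real (S ⁻¹' B) * (a ⬝ᵥ m)
      + a ⬝ᵥ (Sig *ᵥ b) / b ⬝ᵥ (Sig *ᵥ b)
        * (∫ ω in S ⁻¹' B, S ω ∂P - P.real (S ⁻¹' B) * (b ⬝ᵥ m)) := by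
  intro S
  rw [← hXP.integral_sum_mul hX, ← hXP.integral_sum_mul hX, ← hXP.covariance_sum_mul hX hSig,
    ← hXP.variance_sum_mul hX hSig]
  rw [← hXP.variance_sum_mul hX hSig] at hb
  exact (hXP.hasGaussianLaw_prodMk_sum_mul hX a b).setIntegral_preimage_eq (by fun_prop) hb hB

end HasMultivariateNormalLaw

end ProbabilityTheory

theorem stmt17_general [IsProbabilityMeasure (ℙ : Measure Ω)]
    (d : ℕ) (X : Fin d → Ω → ℝ)
    (hXmeas : ∀ i, Measurable (X i))
    (μ : Fin d → ℝ) (Sig : Matrix (Fin d) (Fin d) ℝ) (hSig : Sig.PosDef)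
    (hgauss : ∀ t : Fin d → ℝ,
      Measure.map (fun ω => ∑ i, t i * X i ω) ℙ
        = gaussianReal (∑ i, t i * μ i)
            (Real.toNNReal (∑ i, ∑ k, t i * Sig i k * t k)))
    (S : Ω → ℝ) (hS : ∀ ω, S ω = ∑ i, X i ω)
    (α : ℝ) :
    ∀ j : Fin d,
      (∫ ω in {ω | VaR α S ≤ S ω}, X j ω) / (ℙ {ω | VaR α S ≤ S ω}).toReal
        = μ j + ((Sig *ᵥ fun _ => (1:ℝ)) j / ∑ i, (Sig *ᵥ fun _ => (1:ℝ)) i)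
            * ((∫ ω in {ω | VaR α S ≤ S ω}, S ω) / (ℙ {ω | VaR α S ≤ S ω}).toReal
                - ∑ i, μ i) := by
  intro j
  have hXP : HasMultivariateNormalLaw X μ Sig ℙ := hgauss
  have hXj : X j = fun ω ↦ ∑ i, (Pi.single j 1 : Fin d → ℝ) i * X i ω := by
    ext ω; simp [Pi.single_apply]
  have hSsum : S = fun ω ↦ ∑ i, (1 : Fin d → ℝ) i * X i ω := by
    ext ω; simp [hS]
  have hvar_pos : 0 < (1 : Fin d → ℝ) ⬝ᵥ (Sig *ᵥ 1) := by
    have : Nonempty (Fin d) := ⟨j⟩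
    simpa using hSig.dotProduct_mulVec_pos one_ne_zero
  have hp : (ℙ (S ⁻¹' Ici (VaR α S))).toReal ≠ 0 := by
    refine (ENNReal.toReal_pos (ne_of_gt ?_) (measure_ne_top _ _)).ne'
    rw [hSsum]
    exact (hXP.hasLaw_sum_mul hXmeas 1).measure_preimage_Ici_pos
      (Real.toNNReal_pos.2 hvar_pos).ne' _
  have hreg := hXP.setIntegral_preimage_eq hXmeas hSig.posSemidef (Pi.single j 1) 1
    hvar_pos.ne' (measurableSet_Ici (a := VaR α S))
  simp only [← hXj, ← hSsum, single_dotProduct, one_dotProduct, one_mul, measureReal_def] at hreg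
  rw [show {ω | VaR α S ≤ S ω} = S ⁻¹' Ici (VaR α S) from rfl,
    show (fun _ ↦ (1 : ℝ)) = (1 : Fin d → ℝ) from rfl,
    div_eq_iff hp, hreg]
  field_simp

/-- Elliptical allocation formula in the multivariate normal case:
if `X ~ N(μ, Σ)` (characterized by all one-dimensional projections being Gaussian)
and `S = 𝟙ᵀX`, then
`ESC_α(X_j,S) = μ_j + (Σ𝟙)_j/(𝟙ᵀΣ𝟙) · (ES_α(S) - 𝟙ᵀμ)`. -/
theorem stmt17 [IsProbabilityMeasure (ℙ : Measure Ω)]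
    (d : ℕ) (X : Fin d → Ω → ℝ)
    (hXmeas : ∀ i, Measurable (X i))
    (μ : Fin d → ℝ) (Sig : Matrix (Fin d) (Fin d) ℝ) (hSig : Sig.PosDef)
    (hgauss : ∀ t : Fin d → ℝ,
      Measure.map (fun ω => ∑ i, t i * X i ω) ℙ
        = gaussianReal (∑ i, t i * μ i)
            (Real.toNNReal (∑ i, ∑ k, t i * Sig i k * t k)))
    (S : Ω → ℝ) (hS : ∀ ω, S ω = ∑ i, X i ω)
    (α : ℝ) (hα : α ∈ Ioo (0:ℝ) 1) :
    ∀ j : Fin d,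
      (∫ ω in {ω | VaR α S ≤ S ω}, X j ω) / (ℙ {ω | VaR α S ≤ S ω}).toReal
        = μ j + ((Sig *ᵥ fun _ => (1:ℝ)) j / ∑ i, (Sig *ᵥ fun _ => (1:ℝ)) i)
            * ((∫ ω in {ω | VaR α S ≤ S ω}, S ω) / (ℙ {ω | VaR α S ≤ S ω}).toReal
                - ∑ i, μ i) :=
  stmt17_general d X hXmeas μ Sig hSig hgauss S hS α
end
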